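/- For all m ≥ 0, the prefix of length k_{m+6} − 2 of T_{m+3} equals the prefix of length k_{m+6} − 2 of the word T_{m+1} T_m T_{m+1}. -/

import Mathlib

/-- Tribonacci numbers, index-shifted so that `trib n` represents t_{n-2}:
`trib 0 = t₋₂ = 0`, `trib 1 = t₋₁ = 1`, `trib 2 = t₀ = 1`, and
`trib (n+3) = trib (n+2) + trib (n+1) + trib n`. -/
def trib : ℕ → ℕ
  | 0 => 0
  | 1 => 1
  | 2 => 1
  | n + 3 => trib (n + 2) + trib (n + 1) + trib n

/-- Kernel numbers: k₀ = 0, k₁ = k₂ = 1, k_m = k_{m-1} + k_{m-2} + k_{m-3} - 1 for m ≥ 3. -/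
def ker : ℕ → ℕ
  | 0 => 0
  | 1 => 1
  | 2 => 1
  | n + 3 => ker (n + 2) + ker (n + 1) + ker n - 1

/-- The three-letter alphabet {a, b, c}. -/
inductive Alpha | a | b | c
  deriving DecidableEq, Repr

/-- The Tribonacci substitution σ(a) = ab, σ(b) = ac, σ(c) = a. -/
def sub : Alpha → List Alpha
  | .a => [.a, .b]
  | .b => [.a, .c]
  | .c => [.a]

/-- T_m = σ^m(a). -/
def T (m : ℕ) : List Alpha := (fun w => w.flatMap sub)^[m] [.a]

/-!
Let `Q 0 = aba` and `Q (m+1) = σ(Q m) a` (this is `kernelPrefix m`). If `Q m` is a proper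
prefix of a word `w`, then `Q (m+1)` is a prefix of `σ(w)`, because every `σ`-image of a letter
begins with `a`. Since `σ(T_{m+3}) = T_{m+4}` and `σ(T_{m+1} T_m T_{m+1}) = T_{m+2} T_{m+1} T_{m+2}`,
induction makes `Q m` a common prefix of both words, provided it stays shorter than both.
Lengths follow from letter counts: `Q m` has `k_{m+6} - 2` letters, while `T_{m+3}` has
`k_{m+6} + k_{m+5} - 1` and `T_{m+1} T_m T_{m+1}` has `k_{m+6} + k_{m+3} - 1`.
-/

theorem List.IsPrefix.flatMap_append_of_length_lt {α β : Type*} {f : α → List β} {b : β}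
    (hf : ∀ x, ∃ s, f x = b :: s) {u v : List α} (h : u <+: v) (hlt : u.length < v.length) :
    u.flatMap f ++ [b] <+: v.flatMap f := by
  obtain ⟨r, rfl⟩ := h
  cases r with
  | nil => simp at hlt
  | cons x t =>
    obtain ⟨s, hs⟩ := hf x
    exact ⟨s ++ t.flatMap f, by simp [hs]⟩

lemma one_le_ker : ∀ n, 1 ≤ ker (n + 1)
  | 0 | 1 => le_rfl
  | n + 2 => by
    have := one_le_ker n
    have : 1 ≤ ker (n + 2) := one_le_ker (n + 1)
    show 1 ≤ ker (n + 2) + ker (n + 1) + ker n - 1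
    omega

lemma ker_add_three (n : ℕ) : ker (n + 3) + 1 = ker (n + 2) + ker (n + 1) + ker n := by
  have := one_le_ker n
  show ker (n + 2) + ker (n + 1) + ker n - 1 + 1 = _
  omega

lemma trib_add_one_eq_ker_add_ker : ∀ n, trib n + 1 = ker (n + 1) + ker n
  | 0 | 1 | 2 => rfl
  | n + 3 => by
    have h₀ := trib_add_one_eq_ker_add_ker n
    have h₁ : trib (n + 1) + 1 = ker (n + 2) + ker (n + 1) := trib_add_one_eq_ker_add_ker (n + 1)
    have h₂ : trib (n + 2) + 1 = ker (n + 3) + ker (n + 2) := trib_add_one_eq_ker_add_ker (n + 2)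
    have k₃ := ker_add_three n
    have k₄ : ker (n + 4) + 1 = ker (n + 3) + ker (n + 2) + ker (n + 1) := ker_add_three (n + 1)
    show trib (n + 2) + trib (n + 1) + trib n + 1 = ker (n + 4) + ker (n + 3)
    omega

def sigma (w : List Alpha) : List Alpha := w.flatMap sub

lemma sigma_append (u v : List Alpha) : sigma (u ++ v) = sigma u ++ sigma v :=
  List.flatMap_append ..

lemma length_sigma (w : List Alpha) :
    (sigma w).length = w.length + w.count .a + w.count .b := by
  induction w with
  | nil => rfl
  | cons x w ih => cases x <;> simp [sigma, sub] at ih ⊢ <;> omega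

lemma count_a_sigma (w : List Alpha) : (sigma w).count .a = w.length := by
  induction w with
  | nil => rfl
  | cons x w ih => cases x <;> simp [sigma, sub] at ih ⊢ <;> omega

lemma count_b_sigma (w : List Alpha) : (sigma w).count .b = w.count .a := by
  induction w with
  | nil => rfl
  | cons x w ih => cases x <;> simp [sigma, sub] at ih ⊢ <;> omega

lemma sigma_append_a_prefix_of_length_lt {u v : List Alpha} (h : u <+: v)
    (hlt : u.length < v.length) : sigma u ++ [.a] <+: sigma v :=
  h.flatMap_append_of_length_lt (by intro x; cases x <;> exact ⟨_, rfl⟩) hlt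

lemma T_succ (n : ℕ) : T (n + 1) = sigma (T n) :=
  Function.iterate_succ_apply' _ n _

lemma length_count_T (n : ℕ) :
    (T n).length = trib (n + 2) ∧ (T n).count .a = trib (n + 1) ∧ (T n).count .b = trib n := by
  induction n with
  | zero => exact ⟨rfl, rfl, rfl⟩
  | succ n ih =>
    rw [T_succ, length_sigma, count_a_sigma, count_b_sigma, ih.1, ih.2.1, ih.2.2]
    exact ⟨rfl, rfl, rfl⟩

def kernelPrefix : ℕ → List Alpha
  | 0 => [.a, .b, .a]
  | m + 1 => sigma (kernelPrefix m) ++ [.a]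

lemma length_count_kernelPrefix (m : ℕ) :
    (kernelPrefix m).length + 2 = ker (m + 6) ∧ (kernelPrefix m).count .a + 1 = ker (m + 5) ∧
      (kernelPrefix m).count .b + 1 = ker (m + 4) := by
  induction m with
  | zero => exact ⟨rfl, rfl, rfl⟩
  | succ m ih =>
    obtain ⟨hl, ha, hb⟩ := ih
    have : ker (m + 7) + 1 = ker (m + 6) + ker (m + 5) + ker (m + 4) := ker_add_three (m + 4)
    show (sigma (kernelPrefix m) ++ [Alpha.a]).length + 2 = ker (m + 7) ∧
      (sigma (kernelPrefix m) ++ [Alpha.a]).count .a + 1 = ker (m + 6) ∧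
      (sigma (kernelPrefix m) ++ [Alpha.a]).count .b + 1 = ker (m + 5)
    simp only [List.length_append, List.count_append, length_sigma, count_a_sigma,
      count_b_sigma, List.length_singleton, List.count_singleton_self]
    exact ⟨by omega, by omega, by simpa using ha⟩

lemma length_T_add_three (m : ℕ) : (T (m + 3)).length + 1 = ker (m + 6) + ker (m + 5) := by
  rw [(length_count_T (m + 3)).1]
  exact trib_add_one_eq_ker_add_ker (m + 5)

lemma length_T_T_T (m : ℕ) :
    (T (m + 1) ++ T m ++ T (m + 1)).length + 1 = ker (m + 6) + ker (m + 3) := by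
  have h₃ : trib (m + 3) + 1 = ker (m + 4) + ker (m + 3) := trib_add_one_eq_ker_add_ker (m + 3)
  have h₂ : trib (m + 2) + 1 = ker (m + 3) + ker (m + 2) := trib_add_one_eq_ker_add_ker (m + 2)
  have k₆ : ker (m + 6) + 1 = ker (m + 5) + ker (m + 4) + ker (m + 3) := ker_add_three (m + 3)
  have k₅ : ker (m + 5) + 1 = ker (m + 4) + ker (m + 3) + ker (m + 2) := ker_add_three (m + 2)
  have l₁ : (T (m + 1)).length = trib (m + 3) := (length_count_T (m + 1)).1
  simp only [List.length_append, l₁, (length_count_T m).1]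
  omega

lemma sigma_T_T_T (m : ℕ) :
    sigma (T (m + 1) ++ T m ++ T (m + 1)) = T (m + 2) ++ T (m + 1) ++ T (m + 2) := by
  rw [sigma_append, sigma_append, ← T_succ, ← T_succ]

lemma kernelPrefix_prefix_T (m : ℕ) : kernelPrefix m <+: T (m + 3) := by
  induction m with
  | zero => decide
  | succ m ih =>
    rw [T_succ]
    refine sigma_append_a_prefix_of_length_lt ih ?_
    have := (length_count_kernelPrefix m).1
    have := length_T_add_three m
    have : 1 ≤ ker (m + 5) := one_le_ker (m + 4)
    omega

lemma kernelPrefix_prefix_T_T_T (m : ℕ) : kernelPrefix m <+: T (m + 1) ++ T m ++ T (m + 1) := by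
  induction m with
  | zero => decide
  | succ m ih =>
    rw [← sigma_T_T_T]
    refine sigma_append_a_prefix_of_length_lt ih ?_
    have := (length_count_kernelPrefix m).1
    have := length_T_T_T m
    have : 1 ≤ ker (m + 3) := one_le_ker (m + 2)
    omega

/-- The prefix of length k_{m+6} − 2 of T_{m+3} equals the prefix of the same
length of T_{m+1} T_m T_{m+1}, for all m ≥ 0. -/
theorem prefix_Tm3_eq_prefix (m : ℕ) :
    (T (m + 3)).take (ker (m + 6) - 2) =
      (T (m + 1) ++ T m ++ T (m + 1)).take (ker (m + 6) - 2) := by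
  have hlen : ker (m + 6) - 2 = (kernelPrefix m).length := by
    have := (length_count_kernelPrefix m).1
    omega
  rw [hlen, ← List.prefix_iff_eq_take.mp (kernelPrefix_prefix_T m),
    ← List.prefix_iff_eq_take.mp (kernelPrefix_prefix_T_T_T m)]
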